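/- arXiv:1902.10533 — 4 statements merged into one kernel-verified Lean document; each statement's English description precedes it below -/
import Mathlib

section
/- Let p,t∈ℂ* with |p|<1, let s≥1, n≥1, μ∈Z_{s,n}, and let c=(c_1,…,c_s)∈(ℂ*)^s be generic (all denominators in the definition of E_μ nonzero, both for c and for the shifted parameters). Then for every k∈{1,…,s} and every z∈(ℂ*)^n, E_μ(c_1,…,p·c_k,…,c_s; z; p) = E_μ(c_1,…,c_s; z; p) · ( t^{2·C(μ_k,2)} · p^{μ_k} · c_k^{2μ_k} )^{s-1}, where C(a,b)=binomial(a,b). -/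
open scoped BigOperators Topology
open Finset MeasureTheory

noncomputable section

/-- `(u;p)_∞ = ∏_{i≥0} (1 - p^i u)`. -/
def poch (u p : ℂ) : ℂ := ∏' i : ℕ, (1 - p ^ i * u)

/-- `(u;p,q)_∞ = ∏_{i,j≥0} (1 - p^i q^j u)`. -/
def poch2 (u p q : ℂ) : ℂ := ∏' ij : ℕ × ℕ, (1 - p ^ ij.1 * q ^ ij.2 * u)

/-- The multiplicative theta function `θ(u;p)`. -/
def theta (u p : ℂ) : ℂ := poch u p * poch (p / u) p

/-- The elliptic gamma function `Γ(u;p,q)`. -/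
def ellGamma (u p q : ℂ) : ℂ := poch2 (p * q / u) p q / poch2 u p q

/-- `e(u,v;p) = u⁻¹ θ(uv;p) θ(u/v;p)`. -/
def efun (p t u v : ℂ) : ℂ := u⁻¹ * theta (u * v) p * theta (u / v) p

/-- `θ(u;p)_{t,k}`. -/
def thetaFac (p t u : ℂ) (k : ℕ) : ℂ := ∏ j ∈ Finset.range k, theta (t ^ j * u) p

/-- `e(u,v;p)_{t,k}`. -/
def efunFac (p t u v : ℂ) (k : ℕ) : ℂ := ∏ j ∈ Finset.range k, efun p t (t ^ j * u) v

/-- The number of indices `j < i` with `k j = l`. -/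
def cnt {n s : ℕ} (k : Fin n → Fin s) (i : ℕ) (l : Fin s) : ℕ :=
  (Finset.univ.filter (fun j : Fin n => (j : ℕ) < i ∧ k j = l)).card

/-- The elliptic interpolation function `E_μ(c;z;p)` of type `BC_n`. -/
def interpE (p t : ℂ) {s n : ℕ} (c : Fin s → ℂ) (z : Fin n → ℂ) (μ : Fin s → ℕ) : ℂ :=
  ∑ k : Fin n → Fin s,
    if ∀ l, cnt k n l = μ l then
      ∏ i : Fin n, ∏ l ∈ Finset.univ.filter (fun l => l ≠ k i),
        efun p t (z i) (t ^ cnt k ((i : ℕ) + 1) l * c l) /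
          efun p t (t ^ cnt k (i : ℕ) (k i) * c (k i)) (t ^ cnt k (i : ℕ) l * c l)
    else 0

/-- `Z_{s,n}`, the multi-indices `μ ∈ ℕ^s` with `|μ| = n`. -/
abbrev Zidx (s n : ℕ) := {μ : Fin s → ℕ // ∑ i, μ i = n}

instance (s n : ℕ) : Fintype (Zidx s n) :=
  Fintype.subtype (Finset.Nat.antidiagonalTuple s n)
    (fun μ => Finset.Nat.mem_antidiagonalTuple)

/-- The `BC_n` elliptic hypergeometric kernel `Φ(z;a;p,q)`. -/
def PhiBC (p q t : ℂ) {n m : ℕ} (a : Fin m → ℂ) (z : Fin n → ℂ) : ℂ :=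
  (∏ i, (∏ k, ellGamma (a k * z i) p q * ellGamma (a k * (z i)⁻¹) p q) /
      (ellGamma (z i ^ 2) p q * ellGamma ((z i)⁻¹ ^ 2) p q)) *
  ∏ i, ∏ j ∈ Finset.univ.filter (fun j => i < j),
    (ellGamma (t * (z i * z j)) p q * ellGamma (t * (z i / z j)) p q *
        ellGamma (t * (z j / z i)) p q * ellGamma (t / (z i * z j)) p q) /
      (ellGamma (z i * z j) p q * ellGamma (z i / z j) p q *
        ellGamma (z j / z i) p q * ellGamma ((z i * z j)⁻¹) p q)

/-- `∫_{T^n} f(z) ω_n(z)` where `ω_n(z) = dz/((2πi)^n z₁⋯z_n)`. -/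
def torusInt (n : ℕ) (f : (Fin n → ℂ) → ℂ) : ℂ :=
  (1 / (2 * (Real.pi : ℂ))) ^ n *
    ∫ θ : Fin n → ℝ in Set.univ.pi fun _ : Fin n => Set.Icc (0 : ℝ) (2 * Real.pi),
      f fun i => Complex.exp (Complex.I * (θ i : ℂ))

/-
The theta function is quasi-periodic, `θ(pu;p) = -u⁻¹ θ(u;p)`, hence `e(pu,v;p) = (pu²)⁻¹ e(u,v;p)`
and `e(u,pv;p) = (pv²)⁻¹ e(u,v;p)`. In the summand of `E_μ` indexed by `f : Fin n → Fin s`, the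
factor of a position `i` with `f i ≠ k` sees `c_k` only as the second argument of both `e`'s of one
quotient, with the same power of `t`, so the shift cancels. A position with `f i = k` sees `c_k` in
the first argument of all its `s - 1` denominators, which contributes `(p (t^j c_k)²)^{s-1}`, where
`j` counts the earlier positions mapped to `k`. As `j` runs through `0, …, μ_k - 1`, the product of
these contributions is the claimed multiplier.
-/

lemma multipliable_one_sub_pow_mul {p : ℂ} (hp : ‖p‖ < 1) (u : ℂ) :
    Multipliable fun i : ℕ => 1 - p ^ i * u := by
  have hsum : Summable fun i : ℕ => ‖-(p ^ i * u)‖ := by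
    simpa [norm_pow] using (summable_geometric_of_lt_one (norm_nonneg p) hp).mul_right ‖u‖
  simpa [sub_eq_add_neg] using multipliable_one_add_of_summable hsum

lemma poch_eq_one_sub_mul_poch {p : ℂ} (hp : ‖p‖ < 1) (u : ℂ) :
    poch u p = (1 - u) * poch (p * u) p := by
  have hshift : (fun i : ℕ => 1 - p ^ (i + 1) * u) = fun i => 1 - p ^ i * (p * u) := by
    ext i; ring
  rw [poch, tprod_eq_zero_mul' (hshift ▸ multipliable_one_sub_pow_mul hp (p * u)), poch, hshift,
    pow_zero, one_mul]

lemma theta_mul_left {p : ℂ} (hp0 : p ≠ 0) (hp : ‖p‖ < 1) {u : ℂ} (hu : u ≠ 0) :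
    theta (p * u) p = -u⁻¹ * theta u p := by
  have hinv : poch u⁻¹ p = (1 - u⁻¹) * poch (p / u) p := by
    rw [poch_eq_one_sub_mul_poch hp, div_eq_mul_inv]
  rw [theta, theta, show p / (p * u) = u⁻¹ by field_simp, hinv, poch_eq_one_sub_mul_poch hp u]
  field_simp
  ring

lemma efun_mul_left {p : ℂ} (hp0 : p ≠ 0) (hp : ‖p‖ < 1) (t u : ℂ) {v : ℂ} (hv : v ≠ 0) :
    efun p t (p * u) v = (p * u ^ 2)⁻¹ * efun p t u v := by
  rcases eq_or_ne u 0 with rfl | hu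
  · simp [efun]
  rw [efun, efun, show p * u * v = p * (u * v) by ring, show p * u / v = p * (u / v) by ring,
    theta_mul_left hp0 hp (mul_ne_zero hu hv), theta_mul_left hp0 hp (div_ne_zero hu hv)]
  field_simp

lemma efun_mul_right {p : ℂ} (hp0 : p ≠ 0) (hp : ‖p‖ < 1) (t u : ℂ) {v : ℂ} (hv : v ≠ 0) :
    efun p t u (p * v) = (p * v ^ 2)⁻¹ * efun p t u v := by
  rcases eq_or_ne u 0 with rfl | hu
  · simp [efun]
  have hw : u / (p * v) ≠ 0 := div_ne_zero hu (mul_ne_zero hp0 hv)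
  rw [efun, efun, show u * (p * v) = p * (u * v) by ring, theta_mul_left hp0 hp (mul_ne_zero hu hv),
    show u / v = p * (u / (p * v)) by field_simp, theta_mul_left hp0 hp hw]
  field_simp

lemma sum_card_filter_lt_eq_choose_two {α : Type*} [LinearOrder α] (S : Finset α) :
    ∑ i ∈ S, #(S.filter (· < i)) = (#S).choose 2 := by
  induction S using Finset.induction_on_max with
  | empty => simp
  | insert a s ha ih =>
    have ha' : a ∉ s := fun h => lt_irrefl a (ha a h)
    have hfilter_a : (insert a s).filter (· < a) = s := by
      rw [filter_insert, if_neg (lt_irrefl a), filter_true_of_mem ha]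
    have hfilter : ∀ i ∈ s, #((insert a s).filter (· < i)) = #(s.filter (· < i)) := fun i hi => by
      rw [filter_insert, if_neg (ha i hi).not_gt]
    rw [sum_insert ha', hfilter_a, sum_congr rfl hfilter, ih, card_insert_of_notMem ha',
      Nat.choose_succ_succ', Nat.choose_one_right, add_comm]

section cnt

variable {n s : ℕ} (f : Fin n → Fin s)

lemma cnt_succ_of_ne {i : Fin n} {l : Fin s} (h : f i ≠ l) :
    cnt f (i + 1) l = cnt f i l := by
  unfold cnt
  congr 1
  ext j
  simp only [mem_filter, mem_univ, true_and, Nat.lt_succ_iff_lt_or_eq, or_and_right,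
    or_iff_left_iff_imp, and_imp]
  intro hj hjl
  exact absurd (Fin.ext hj ▸ hjl) h

lemma cnt_eq_card_filter_lt (i : Fin n) (l : Fin s) :
    cnt f i l = #((univ.filter (f · = l)).filter (· < i)) := by
  rw [cnt, filter_filter]
  simp only [Fin.lt_def, and_comm]

lemma cnt_eq_card (l : Fin s) : cnt f n l = #(univ.filter (f · = l)) := by
  simp [cnt]

lemma sum_cnt_eq_choose_two (l : Fin s) :
    ∑ i ∈ univ.filter (f · = l), cnt f i l = (cnt f n l).choose 2 := by
  rw [sum_congr rfl fun i _ => cnt_eq_card_filter_lt f i l, sum_card_filter_lt_eq_choose_two,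
    cnt_eq_card]

lemma prod_ite_eq_pow_choose_two {M : Type*} [CommMonoid M] (l : Fin s) (p t c : M) :
    ∏ i, (if f i = l then p * (t ^ cnt f i l * c) ^ 2 else 1)
      = t ^ (2 * (cnt f n l).choose 2) * p ^ cnt f n l * c ^ (2 * cnt f n l) := by
  simp only [← prod_filter, mul_pow, prod_mul_distrib, prod_const, ← pow_mul,
    prod_pow_eq_pow_sum, ← sum_mul, sum_cnt_eq_choose_two, ← cnt_eq_card]
  ac_rfl

end cnt

def interpEFactor (p t : ℂ) {s n : ℕ} (c : Fin s → ℂ) (z : Fin n → ℂ) (f : Fin n → Fin s)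
    (i : Fin n) : ℂ :=
  ∏ l ∈ univ.filter (fun l => l ≠ f i),
    efun p t (z i) (t ^ cnt f ((i : ℕ) + 1) l * c l) /
      efun p t (t ^ cnt f (i : ℕ) (f i) * c (f i)) (t ^ cnt f (i : ℕ) l * c l)

lemma interpE_eq_sum (p t : ℂ) {s n : ℕ} (c : Fin s → ℂ) (z : Fin n → ℂ) (μ : Fin s → ℕ) :
    interpE p t c z μ
      = ∑ f : Fin n → Fin s, if ∀ l, cnt f n l = μ l then ∏ i, interpEFactor p t c z f i else 0 :=
  rfl

section pshift

variable {p t : ℂ} (hp0 : p ≠ 0) (hp : ‖p‖ < 1) (ht0 : t ≠ 0)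
  {s n : ℕ} {c : Fin s → ℂ} (hc : ∀ i, c i ≠ 0) (k : Fin s) (z : Fin n → ℂ) (f : Fin n → Fin s)
include hp0 hp ht0 hc

lemma interpEFactor_update_of_eq {i : Fin n} (hi : f i = k) :
    interpEFactor p t (Function.update c k (p * c k)) z f i
      = interpEFactor p t c z f i * (p * (t ^ cnt f i k * c k) ^ 2) ^ (s - 1) := by
  have hcard : #(univ.filter fun l : Fin s => l ≠ f i) = s - 1 := by
    rw [filter_ne', card_erase_of_mem (mem_univ _), card_univ, Fintype.card_fin]
  rw [interpEFactor, interpEFactor, ← hcard, ← prod_const, ← prod_mul_distrib]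
  refine prod_congr rfl fun l hl => ?_
  have hlk : l ≠ k := hi ▸ (mem_filter.mp hl).2
  rw [Function.update_of_ne hlk, hi, Function.update_self,
    show t ^ cnt f i k * (p * c k) = p * (t ^ cnt f i k * c k) by ring,
    efun_mul_left hp0 hp t _ (mul_ne_zero (pow_ne_zero _ ht0) (hc l))]
  field_simp

lemma interpEFactor_update_of_ne {i : Fin n} (hi : f i ≠ k) :
    interpEFactor p t (Function.update c k (p * c k)) z f i = interpEFactor p t c z f i := by
  refine prod_congr rfl fun l _ => ?_
  rw [Function.update_of_ne hi]
  rcases eq_or_ne l k with rfl | hlk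
  · have hv : t ^ cnt f i l * c l ≠ 0 := mul_ne_zero (pow_ne_zero _ ht0) (hc l)
    rw [Function.update_self, cnt_succ_of_ne f hi, mul_left_comm,
      efun_mul_right hp0 hp t _ hv, efun_mul_right hp0 hp t _ hv,
      mul_div_mul_left _ _ (inv_ne_zero (mul_ne_zero hp0 (pow_ne_zero _ hv)))]
  · rw [Function.update_of_ne hlk]

lemma prod_interpEFactor_update :
    ∏ i, interpEFactor p t (Function.update c k (p * c k)) z f i
      = (∏ i, interpEFactor p t c z f i)
        * (t ^ (2 * (cnt f n k).choose 2) * p ^ cnt f n k * c k ^ (2 * cnt f n k)) ^ (s - 1) := by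
  have hfactor : ∀ i, interpEFactor p t (Function.update c k (p * c k)) z f i
      = interpEFactor p t c z f i
        * (if f i = k then p * (t ^ cnt f i k * c k) ^ 2 else 1) ^ (s - 1) := fun i => by
    split_ifs with hi
    · exact interpEFactor_update_of_eq hp0 hp ht0 hc k z f hi
    · rw [one_pow, mul_one, interpEFactor_update_of_ne hp0 hp ht0 hc k z f hi]
  rw [prod_congr rfl fun i _ => hfactor i, prod_mul_distrib, prod_pow,
    prod_ite_eq_pow_choose_two]

end pshift

theorem interpE_param_pshift_general (p t : ℂ) (hp0 : p ≠ 0) (hp : ‖p‖ < 1) (ht0 : t ≠ 0)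
    (s n : ℕ) (μ : Zidx s n)
    (c : Fin s → ℂ) (hc : ∀ i, c i ≠ 0)
    (k : Fin s)
    (z : Fin n → ℂ) :
    interpE p t (Function.update c k (p * c k)) z μ.1
    = interpE p t c z μ.1
        * (t ^ (2 * (μ.1 k).choose 2) * p ^ μ.1 k * c k ^ (2 * μ.1 k)) ^ (s - 1) := by
  rw [interpE_eq_sum, interpE_eq_sum, sum_mul]
  refine sum_congr rfl fun f _ => ?_
  split_ifs with hf
  · rw [prod_interpEFactor_update hp0 hp ht0 hc k z f, hf k]
  · rw [zero_mul]

/-- quasi-periodicity of the elliptic interpolation function with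
respect to `p`-shifts of the parameters. -/
theorem interpE_param_pshift (p t : ℂ) (hp0 : p ≠ 0) (hp : ‖p‖ < 1) (ht0 : t ≠ 0)
    (s n : ℕ) (hs : 1 ≤ s) (hn : 1 ≤ n) (μ : Zidx s n)
    (c : Fin s → ℂ) (hc : ∀ i, c i ≠ 0)
    (hgen : ∀ α β : ℕ, α ≤ n → β ≤ n → ∀ i j : Fin s, i ≠ j →
      efun p t (t ^ α * c i) (t ^ β * c j) ≠ 0)
    (k : Fin s)
    (hgen' : ∀ α β : ℕ, α ≤ n → β ≤ n → ∀ i j : Fin s, i ≠ j →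
      efun p t (t ^ α * Function.update c k (p * c k) i)
        (t ^ β * Function.update c k (p * c k) j) ≠ 0)
    (z : Fin n → ℂ) (hz : ∀ i, z i ≠ 0) :
    interpE p t (Function.update c k (p * c k)) z μ.1
    = interpE p t c z μ.1
        * (t ^ (2 * (μ.1 k).choose 2) * p ^ μ.1 k * c k ^ (2 * μ.1 k)) ^ (s - 1) :=
  interpE_param_pshift_general p t hp0 hp ht0 s n μ c hc k z

end
end

section
/- Let p,q∈ℂ with |p|<1 and |q|<1. Then (1-u)·Γ(u;p,q) tends to 1/((p;p)_∞·(q;q)_∞) as u→1 (u≠1), i.e. the function u ↦ (1-u)Γ(u;p,q) has limit 1/((p;p)_∞(q;q)_∞) along the punctured neighborhood filter at u=1. -/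
open scoped BigOperators Topology
open Finset MeasureTheory

noncomputable section

/-! Peeling off the rows `i = 0` and `j = 0` of the double product gives
`(u;p,q)_∞ = (1 - u) (pu;p)_∞ (qu;q)_∞ (pqu;p,q)_∞`. The factor `1 - u` cancels, and what is
left of `(1 - u) Γ(u;p,q)` is a quotient of products that converge locally uniformly in `u`, hence
are continuous, and do not vanish at `u = 1`; there it equals
`(pq;p,q)_∞ / ((p;p)_∞ (q;q)_∞ (pq;p,q)_∞)`. -/

open Filter

section OneSubMul

variable {ι R : Type*} [NormedCommRing R] [NormOneClass R] [CompleteSpace R] {c : ι → R}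

lemma multipliable_one_sub_mul (hc : Summable (‖c ·‖)) (v : R) :
    Multipliable fun i ↦ 1 - c i * v := by
  have hcv : Summable fun i ↦ ‖-(c i * v)‖ :=
    (hc.mul_right ‖v‖).of_nonneg_of_le (fun _ ↦ norm_nonneg _)
      fun i ↦ by simpa using norm_mul_le (c i) v
  simpa [sub_eq_add_neg] using multipliable_one_add_of_summable hcv

lemma tprod_one_sub_mul_ne_zero [NormMulClass R] (hc : Summable (‖c ·‖)) {v : R}
    (hv : ∀ i, c i * v ≠ 1) : ∏' i, (1 - c i * v) ≠ 0 := by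
  have hcv : Summable fun i ↦ ‖-(c i * v)‖ := by simpa using hc.mul_right ‖v‖
  simpa [sub_eq_add_neg] using tprod_one_add_ne_zero_of_summable
    (fun i ↦ by rw [← sub_eq_add_neg, sub_ne_zero]; exact (hv i).symm) hcv

lemma continuous_tprod_one_sub_mul [LocallyCompactSpace R] (hc : Summable (‖c ·‖)) :
    Continuous fun v ↦ ∏' i, (1 - c i * v) := by
  refine continuous_iff_continuousAt.2 fun v₀ ↦ ?_
  have hprod := Summable.hasProdLocallyUniformlyOn_one_add (f := fun i v ↦ -(c i * v))
    (Metric.isOpen_ball (x := 0) (ε := ‖v₀‖ + 1)) (hc.mul_right (‖v₀‖ + 1))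
    (.of_forall fun i v hv ↦ by
      rw [norm_neg]
      exact (norm_mul_le _ _).trans (by gcongr; exact (mem_ball_zero_iff.1 hv).le))
    fun i ↦ by fun_prop
  have hcont := hprod.continuousOn (.of_forall fun s ↦ by fun_prop)
  simpa [sub_eq_add_neg] using
    hcont.continuousAt (Metric.isOpen_ball.mem_nhds (by simp))

end OneSubMul

section Pochhammer

variable {p q : ℂ}

lemma summable_norm_pow_mul_pow (hp : ‖p‖ < 1) (hq : ‖q‖ < 1) :
    Summable fun ij : ℕ × ℕ ↦ ‖p ^ ij.1 * q ^ ij.2‖ :=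
  (summable_norm_geometric_of_norm_lt_one hp).mul_norm (summable_norm_geometric_of_norm_lt_one hq)

lemma continuous_poch (hp : ‖p‖ < 1) : Continuous fun u ↦ poch u p :=
  continuous_tprod_one_sub_mul (summable_norm_geometric_of_norm_lt_one hp)

lemma continuous_poch2 (hp : ‖p‖ < 1) (hq : ‖q‖ < 1) : Continuous fun u ↦ poch2 u p q :=
  continuous_tprod_one_sub_mul (summable_norm_pow_mul_pow hp hq)

lemma poch_eq_one_sub_mul (hp : ‖p‖ < 1) (u : ℂ) : poch u p = (1 - u) * poch (p * u) p := by
  have hshift (i : ℕ) : 1 - p ^ (i + 1) * u = 1 - p ^ i * (p * u) := by ring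
  rw [poch, poch, tprod_eq_zero_mul' (f := fun i ↦ 1 - p ^ i * u)]
  · simp only [pow_zero, one_mul, hshift]
  · simpa only [hshift] using
      multipliable_one_sub_mul (summable_norm_geometric_of_norm_lt_one hp) (p * u)

lemma hasProd_poch_poch2 (hp : ‖p‖ < 1) (hq : ‖q‖ < 1) (u : ℂ) :
    HasProd (fun i ↦ poch (p ^ i * u) q) (poch2 u p q) := by
  have hfiber (i : ℕ) : HasProd (fun j ↦ 1 - p ^ i * q ^ j * u) (poch (p ^ i * u) q) := by
    have hslice (j : ℕ) : 1 - p ^ i * q ^ j * u = 1 - q ^ j * (p ^ i * u) := by ring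
    simp only [hslice]
    exact (multipliable_one_sub_mul (summable_norm_geometric_of_norm_lt_one hq) _).hasProd
  exact (multipliable_one_sub_mul (summable_norm_pow_mul_pow hp hq) u).hasProd.prod_fiberwise hfiber

lemma poch2_eq_poch_mul (hp : ‖p‖ < 1) (hq : ‖q‖ < 1) (u : ℂ) :
    poch2 u p q = poch u q * poch2 (p * u) p q := by
  have hshift (i : ℕ) : poch (p ^ (i + 1) * u) q = poch (p ^ i * (p * u)) q := by
    rw [pow_succ, mul_assoc]
  have h := HasProd.prod_range_mul (f := fun i ↦ poch (p ^ i * u) q) (k := 1)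
    (by simpa only [hshift] using hasProd_poch_poch2 hp hq (p * u))
  rw [Finset.prod_range_one, pow_zero, one_mul] at h
  exact (hasProd_poch_poch2 hp hq u).unique h

lemma poch2_comm (u p q : ℂ) : poch2 u p q = poch2 u q p := by
  rw [poch2, poch2, ← (Equiv.prodComm ℕ ℕ).tprod_eq]
  exact tprod_congr fun ij ↦ by simp [mul_comm]

lemma poch2_eq_one_sub_mul (hp : ‖p‖ < 1) (hq : ‖q‖ < 1) (u : ℂ) :
    poch2 u p q = (1 - u) * (poch (p * u) p * poch (q * u) q * poch2 (p * q * u) p q) := by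
  rw [poch2_eq_poch_mul hp hq, poch_eq_one_sub_mul hq, poch2_comm, poch2_eq_poch_mul hq hp,
    poch2_comm, show q * (p * u) = p * q * u by ring]
  ring

lemma poch_self_ne_zero (hp : ‖p‖ < 1) : poch p p ≠ 0 :=
  tprod_one_sub_mul_ne_zero (summable_norm_geometric_of_norm_lt_one hp) fun i ↦
    ne_of_apply_ne norm <| by
      simpa [← pow_succ] using (pow_lt_one₀ (norm_nonneg p) hp i.succ_ne_zero).ne

lemma poch2_mul_ne_zero (hp : ‖p‖ < 1) (hq : ‖q‖ < 1) : poch2 (p * q) p q ≠ 0 :=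
  tprod_one_sub_mul_ne_zero (summable_norm_pow_mul_pow hp hq) fun ij ↦
    ne_of_apply_ne norm <| by
      rw [norm_one, show p ^ ij.1 * q ^ ij.2 * (p * q) = p ^ (ij.1 + 1) * q ^ (ij.2 + 1) by ring,
        norm_mul, norm_pow, norm_pow]
      exact (mul_lt_one_of_nonneg_of_lt_one_left (by positivity)
        (pow_lt_one₀ (norm_nonneg p) hp ij.1.succ_ne_zero)
        (pow_le_one₀ (norm_nonneg q) hq.le)).ne

end Pochhammer

/-- `(1-u)Γ(u;p,q) → 1/((p;p)_∞ (q;q)_∞)` as `u → 1`. -/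
theorem residue_ellGamma_at_one (p q : ℂ)
    (hp : ‖p‖ < 1) (hq : ‖q‖ < 1) :
    Filter.Tendsto (fun u : ℂ => (1 - u) * ellGamma u p q)
      (𝓝[≠] (1 : ℂ)) (𝓝 ((poch p p * poch q q)⁻¹)) := by
  set G : ℂ → ℂ := fun u ↦ poch (p * u) p * poch (q * u) q * poch2 (p * q * u) p q
  have hG : Continuous G := by
    have := continuous_poch hp
    have := continuous_poch hq
    have := continuous_poch2 hp hq
    fun_prop
  have hG1 : G 1 = poch p p * poch q q * poch2 (p * q) p q := by simp only [G, mul_one]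
  have hG1_ne : G 1 ≠ 0 := by
    rw [hG1]
    exact mul_ne_zero (mul_ne_zero (poch_self_ne_zero hp) (poch_self_ne_zero hq))
      (poch2_mul_ne_zero hp hq)
  have hnum : ContinuousAt (fun u ↦ poch2 (p * q / u) p q) 1 :=
    (continuous_poch2 hp hq).continuousAt.comp (continuousAt_const.div continuousAt_id one_ne_zero)
  have hcancel : (fun u ↦ poch2 (p * q / u) p q / G u) =ᶠ[𝓝[≠] 1]
      fun u ↦ (1 - u) * ellGamma u p q := by
    filter_upwards [self_mem_nhdsWithin] with u hu
    rw [ellGamma, poch2_eq_one_sub_mul hp hq u, mul_div_assoc',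
      mul_div_mul_left _ _ (sub_ne_zero.2 (Ne.symm hu))]
  have hlim := ((hnum.div hG.continuousAt hG1_ne).tendsto.mono_left nhdsWithin_le_nhds).congr'
    hcancel
  rwa [Pi.div_apply, div_one, hG1, div_mul_cancel_right₀ (poch2_mul_ne_zero hp hq)] at hlim

end
end

section
/- Let r≥2, n≥1, m=2r+4, and p,q,t∈ℂ with |p|<1, |q|<1, t∈ℂ*. Fix generic a_1,…,a_r,a_{r+2},…,a_{m-1}∈ℂ* and set ã_m=pq/(t^{2n-2} a_2⋯a_r a_{r+2}⋯a_{m-1}). With L_{r,n} as in the context and with L̃_{r,n} denoting the expression [ ∏_{i=1}^{n-1} Γ(t^i;p,q)^{C(n-i+r-2,r-1)} / ((p;p)_∞(q;q)_∞)^{C(n+r-2,r-1)} ] · ∏_{i=0}^{n-1} ∏_{k≠1,r+1} ( Γ(t^i a_1 a_k;p,q)Γ(t^i a_k/a_1;p,q) )^{C(n-i+r-2,r-1)} · [ ∏_{i=0}^{n-1} ∏_{k<l, k,l≠1,r+1} Γ(t^i a_k a_l;p,q)^{C(n-i+r-2,r-1)} ] / [ ∏_{0≤i+j<n} ∏_{1≤k<l≤r}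 ( e(t^i a_k,t^j a_l;p)e(t^i a_k,t^j a_l;q) )^{C(n-i-j+r-3,r-2)} ] (all with a_m interpreted as ã_m, indices k,l ranging in {1,…,m}), the following identity holds: L̃_{r,n} = ((p;p)_∞(q;q)_∞)^{-C(n+r-2,r-1)} · [ Γ(t;p,q)^{C(n+r-2,r-1)} / ∏_{i=1}^n Γ(t^i;p,q)^{C(n-i+r-2,r-2)} ] · [ ∏_{k≠1,r+1} ( Γ(a_1 a_k;p,q)Γ(a_k/a_1;p,q) )^{C(n+r-2,r-1)} ] / [ ∏_{j=0}^{n-1} ∏_{l=2}^r ( e(a_1,t^j a_l;p)·e(a_1,t^j a_l;q) )^{C(n-j+r-3,r-2)} ] · L_{r-1,n}(a_2,…,a_r,a_{r+2},…,a_{m-1},ã_m) · L_{r,n-1}(t a_1, a_2,…,a_r, t a_1^{-1}, a_{r+2},…,a_{m-1}, ã_m), where L_{r,0}=1 and C(a,b)=binomial(a,b). -/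
open scoped BigOperators Topology
open Finset MeasureTheory

noncomputable section

/-- The explicit product `L_{r,n}(a)` of elliptic gamma functions and `e`-factors. -/
def Lfun (p q t : ℂ) (r n : ℕ) (b : Fin (2 * r + 4) → ℂ) : ℂ :=
  (∏ i ∈ Finset.range n, ∏ k : Fin (2 * r + 4), ∏ l ∈ Finset.univ.filter (fun l => k < l),
      ellGamma (t ^ i * (b k * b l)) p q ^ ((n - i + r - 2).choose (r - 1)))
  / ∏ i ∈ Finset.range n, ∏ j ∈ Finset.range (n - i), ∏ k : Fin r,
      ∏ l ∈ Finset.univ.filter (fun l => k < l),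
        (efun p t (t ^ i * b (Fin.castLE (by omega) k)) (t ^ j * b (Fin.castLE (by omega) l)) *
            efun q t (t ^ i * b (Fin.castLE (by omega) k)) (t ^ j * b (Fin.castLE (by omega) l)))
          ^ ((n - i - j + r - 3).choose (r - 2))

/-- The parameter vector `(a₁,…,a_r, b, a_{r+2},…,a_{m-1}, a_m(b))` with
`a_m(b) = pq/(t^{2n-2} a₁⋯a_{m-1})`. -/
def Avec (p q t : ℂ) (r n : ℕ) (a : Fin (2 * r + 4) → ℂ) (b : ℂ) : Fin (2 * r + 4) → ℂ :=
  fun k =>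
    if (k : ℕ) = r then b
    else if (k : ℕ) = 2 * r + 3 then
      p * q / (t ^ (2 * n - 2) *
        ((∏ l ∈ Finset.univ.filter
            (fun l : Fin (2 * r + 4) => (l : ℕ) ≠ r ∧ (l : ℕ) ≠ 2 * r + 3), a l) * b))
    else a k

/-- `ã_m = pq/(t^{2n-2} a₂⋯a_r a_{r+2}⋯a_{m-1})`. -/
def amtil (p q t : ℂ) (r n : ℕ) (a : Fin (2 * r + 4) → ℂ) : ℂ :=
  p * q / (t ^ (2 * n - 2) *
    ∏ l ∈ Finset.univ.filter
      (fun l : Fin (2 * r + 4) => (l : ℕ) ≠ 0 ∧ (l : ℕ) ≠ r ∧ (l : ℕ) ≠ 2 * r + 3), a l)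

/-- The limit parameter vector `ã = (a₁,…,a_r, a₁⁻¹, a_{r+2},…,a_{m-1}, ã_m)`. -/
def Atld (p q t : ℂ) (r n : ℕ) (a : Fin (2 * r + 4) → ℂ) : Fin (2 * r + 4) → ℂ :=
  fun k =>
    if (k : ℕ) = r then (a 0)⁻¹
    else if (k : ℕ) = 2 * r + 3 then amtil p q t r n a
    else a k

/-- The vector `(a₂,…,a_r, a_{r+2},…,a_{m-1}, ã_m)` of length `2(r-1)+4`. -/
def Bvec (p q t : ℂ) (r n : ℕ) (a : Fin (2 * r + 4) → ℂ) : Fin (2 * (r - 1) + 4) → ℂ :=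
  fun k =>
    if h : (k : ℕ) < r - 1 then a ⟨(k : ℕ) + 1, by omega⟩
    else if h2 : (k : ℕ) < 2 * r + 1 then a ⟨(k : ℕ) + 2, by omega⟩
    else amtil p q t r n a

/-- The vector `(t a₁, a₂,…,a_r, t a₁⁻¹, a_{r+2},…,a_{m-1}, ã_m)`. -/
def Ashift (p q t : ℂ) (r n : ℕ) (a : Fin (2 * r + 4) → ℂ) : Fin (2 * r + 4) → ℂ :=
  fun k =>
    if (k : ℕ) = 0 then t * a 0
    else if (k : ℕ) = r then t * (a 0)⁻¹
    else Atld p q t r n a k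


/-
Both sides are finite products of elliptic gamma functions and `e`-factors, so the identity is
bookkeeping. In `L_{r,n-1}(t a₁, …, t a₁⁻¹, …)` the pair of entries `t a₁`, `t a₁⁻¹` gives
`Γ(t^{i+2})`, the pairs of one of them with `ã_k` give `Γ(t^{i+1} a₁^{±1} ã_k)`, and the remaining
pairs involve only the parameters of `L_{r-1,n}`; likewise the index `1` splits off the factors
`e(t^i a₁, t^j a_l)` of the `e`-denominators. Pascal's rule `C(m+1,k+1) = C(m,k) + C(m,k+1)` on the
exponents then splits every product over `i < n` (or `i + j < n`) of `L̃_{r,n}` into the matching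
products of `L_{r-1,n}` and of `L_{r,n-1}`, the exponents vanishing on the boundary `i = n`
(or `i + j = n`).
-/

section PairProducts

variable {ι κ M : Type*} [LinearOrder ι] [LinearOrder κ] [CommMonoid M]

def prodPairs (s : Finset ι) (f : ι → ι → M) : M :=
  ∏ k ∈ s, ∏ l ∈ s with k < l, f k l

theorem prod_filter_pairs_eq_prodPairs (s : Finset ι) (P : ι → Prop) [DecidablePred P]
    (f : ι → ι → M) :
    ∏ k ∈ s with P k, ∏ l ∈ s with k < l ∧ P l, f k l = prodPairs (s.filter P) f := by
  refine prod_congr rfl fun k _ => ?_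
  rw [filter_filter]
  exact prod_congr (filter_congr fun _ _ => and_comm) fun _ _ => rfl

theorem prodPairs_insert {s : Finset ι} {j : ι} (hj : j ∉ s) (f : ι → ι → M) :
    prodPairs (insert j s) f
      = (∏ l ∈ s, if j < l then f j l else f l j) * prodPairs s f := by
  have hrow : ∀ k ∈ s, ∏ l ∈ insert j s with k < l, f k l
      = (if k < j then f k j else 1) * ∏ l ∈ s with k < l, f k l := by
    intro k _
    rw [filter_insert]
    split_ifs
    · rw [prod_insert (fun h => hj (mem_filter.1 h).1)]
    · rw [one_mul]
  have hlow : s.filter (fun l => ¬ j < l) = s.filter (· < j) :=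
    filter_congr fun l hl => by
      rw [not_lt, le_iff_lt_or_eq, or_iff_left (ne_of_mem_of_not_mem hl hj)]
  rw [prodPairs, prodPairs, prod_insert hj, filter_insert, if_neg (lt_irrefl j),
    prod_congr rfl hrow, prod_mul_distrib, ← prod_filter, prod_ite, hlow, mul_assoc]

theorem prodPairs_insert_of_forall_lt {s : Finset ι} {j : ι} (hj : ∀ l ∈ s, j < l)
    (f : ι → ι → M) :
    prodPairs (insert j s) f = (∏ l ∈ s, f j l) * prodPairs s f := by
  rw [prodPairs_insert (fun h => lt_irrefl j (hj j h))]
  exact congrArg (· * _) (prod_congr rfl fun l hl => if_pos (hj l hl))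

theorem prodPairs_insert_of_symm {s : Finset ι} {j : ι} (hj : j ∉ s) {f : ι → ι → M}
    (hf : ∀ k l, f k l = f l k) :
    prodPairs (insert j s) f = (∏ l ∈ s, f j l) * prodPairs s f := by
  rw [prodPairs_insert hj]
  exact congrArg (· * _) (prod_congr rfl fun l _ => by split_ifs <;> [rfl; exact hf l j])

theorem prodPairs_insert_insert_of_symm {s : Finset ι} {j₁ j₂ : ι} (h₁ : j₁ ∉ insert j₂ s)
    (h₂ : j₂ ∉ s) {f : ι → ι → M} (hf : ∀ k l, f k l = f l k) :
    prodPairs (insert j₁ (insert j₂ s)) f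
      = f j₁ j₂ * (∏ l ∈ s, f j₁ l * f j₂ l) * prodPairs s f := by
  rw [prodPairs_insert_of_symm h₁ hf, prodPairs_insert_of_symm h₂ hf, prod_insert h₂,
    prod_mul_distrib]
  ac_rfl

theorem prodPairs_map_of_strictMono (s : Finset ι) {e : ι → κ} (he : StrictMono e)
    (f : κ → κ → M) :
    prodPairs (s.map ⟨e, he.injective⟩) f = prodPairs s fun k l => f (e k) (e l) := by
  rw [prodPairs, prod_map]
  refine prod_congr rfl fun k _ => ?_
  rw [filter_map, prod_map]
  exact prod_congr (filter_congr fun l _ => he.lt_iff_lt) fun _ _ => rfl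

end PairProducts

section FinPairProducts

variable {M : Type*} [CommMonoid M]

theorem prodPairs_univ_fin {r : ℕ} (hr : 0 < r) (f : Fin r → Fin r → M) :
    prodPairs univ f
      = (∏ l ∈ univ.filter (fun l : Fin r => (l : ℕ) ≠ 0), f ⟨0, hr⟩ l) *
          prodPairs (univ.filter fun l : Fin r => (l : ℕ) ≠ 0) f := by
  have huniv : (univ : Finset (Fin r))
      = insert ⟨0, hr⟩ (univ.filter fun l : Fin r => (l : ℕ) ≠ 0) := by
    ext l; simp [Fin.ext_iff, em]
  exact (congrArg (prodPairs · f) huniv).trans <| prodPairs_insert_of_forall_lt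
    (fun l hl => Fin.lt_def.2 (Nat.pos_of_ne_zero (mem_filter.1 hl).2)) f

theorem prodPairs_fin_two_filter_ne_zero (f : Fin 2 → Fin 2 → M) :
    prodPairs (univ.filter fun l : Fin 2 => (l : ℕ) ≠ 0) f = 1 := by
  have : (univ.filter fun l : Fin 2 => (l : ℕ) ≠ 0) = {1} := by decide
  rw [this, prodPairs, prod_singleton, filter_singleton, if_neg (lt_irrefl 1), prod_empty]

end FinPairProducts

section Pascal

variable {M : Type*} [CommMonoid M]

theorem Nat.choose_eq_add_of_eq_succ {m n x k : ℕ} (hm : m = x + 1) (hn : n = k + 1) :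
    m.choose n = x.choose k + x.choose n := by
  subst hm hn
  exact Nat.choose_succ_succ' x k

theorem prod_range_pow_pascal (g : ℕ → M) {w w₁ : ℕ → ℕ}
    (hw : ∀ x, w (x + 1) = w₁ x + w x) (hw0 : w 0 = 0) (N : ℕ) :
    ∏ i ∈ range (N + 1), g i ^ w (N + 1 - i)
      = (∏ i ∈ range (N + 1), g i ^ w₁ (N - i)) * ∏ i ∈ range N, g i ^ w (N - i) := by
  rw [← mul_one (∏ i ∈ range N, g i ^ w (N - i)), ← pow_zero (g N), ← hw0,
    ← Nat.sub_self N, ← prod_range_succ (fun i => g i ^ w (N - i)), ← prod_mul_distrib]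
  refine prod_congr rfl fun i hi => ?_
  rw [← pow_add, ← hw, Nat.sub_add_comm (mem_range_succ_iff.1 hi)]

theorem prod_triangle_pow_pascal (g : ℕ → ℕ → M) {w w₁ : ℕ → ℕ}
    (hw : ∀ x, w (x + 1) = w₁ x + w x) (hw0 : w 0 = 0) (N : ℕ) :
    ∏ i ∈ range (N + 1), ∏ j ∈ range (N + 1 - i), g i j ^ w (N + 1 - i - j)
      = (∏ i ∈ range (N + 1), ∏ j ∈ range (N + 1 - i), g i j ^ w₁ (N - i - j)) *
          ∏ i ∈ range N, ∏ j ∈ range (N - i), g i j ^ w (N - i - j) := by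
  have hlast : ∏ j ∈ range (N - N), g N j ^ w (N - N - j) = 1 := by simp
  rw [← mul_one (∏ i ∈ range N, _), ← hlast,
    ← prod_range_succ (fun i => ∏ j ∈ range (N - i), g i j ^ w (N - i - j)), ← prod_mul_distrib]
  refine prod_congr rfl fun i hi => ?_
  rw [Nat.sub_add_comm (mem_range_succ_iff.1 hi)]
  exact prod_range_pow_pascal (g i) hw hw0 (N - i)

theorem prod_pow_choose_mul_prod_pow_choose (g : ℕ → M) {r : ℕ} (hr : 2 ≤ r) (N : ℕ) :
    (∏ i ∈ range N, g (i + 1) ^ (N - i + r - 2).choose (r - 1)) *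
        ∏ i ∈ range (N + 1), g (i + 1) ^ (N - i + r - 2).choose (r - 2)
      = g 1 ^ (N + 1 + r - 2).choose (r - 1) *
          ∏ i ∈ range N, g (i + 2) ^ (N - i + r - 2).choose (r - 1) := by
  have h := prod_range_pow_pascal (fun i => g (i + 1)) (w := fun x => (x + r - 2).choose (r - 1))
    (w₁ := fun x => (x + r - 2).choose (r - 2))
    (fun x => Nat.choose_eq_add_of_eq_succ (by omega) (by omega))
    (Nat.choose_eq_zero_of_lt (by omega)) N
  rw [prod_range_succ', mul_comm] at h
  simp only [Nat.add_sub_add_right, Nat.sub_zero, zero_add] at h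
  rw [mul_comm (∏ i ∈ range N, _), ← h]

theorem prod_triangle_prodPairs_fin_eq {r : ℕ} (hr : 2 ≤ r) (E : ℂ → ℂ → M) (t : ℂ)
    (b : Fin r → ℂ) {b₀ : ℂ} (hb₀ : b ⟨0, by omega⟩ = b₀) (N : ℕ) :
    ∏ i ∈ range (N + 1), ∏ j ∈ range (N + 1 - i),
        (prodPairs univ fun k l => E (t ^ i * b k) (t ^ j * b l))
          ^ (N + 1 - i - j + r - 3).choose (r - 2)
      = (∏ j ∈ range (N + 1),
            (∏ l ∈ univ.filter (fun l : Fin r => (l : ℕ) ≠ 0), E b₀ (t ^ j * b l))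
              ^ (N + 1 - j + r - 3).choose (r - 2)) *
        (∏ i ∈ range N, ∏ j ∈ range (N - i),
            (∏ l ∈ univ.filter (fun l : Fin r => (l : ℕ) ≠ 0), E (t ^ (i + 1) * b₀) (t ^ j * b l))
              ^ (N - i - j + r - 3).choose (r - 2)) *
        ((∏ i ∈ range (N + 1), ∏ j ∈ range (N + 1 - i),
            (prodPairs (univ.filter fun l : Fin r => (l : ℕ) ≠ 0)
              fun k l => E (t ^ i * b k) (t ^ j * b l)) ^ (N - i - j + r - 3).choose (r - 3)) *
          ∏ i ∈ range N, ∏ j ∈ range (N - i),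
            (prodPairs (univ.filter fun l : Fin r => (l : ℕ) ≠ 0)
              fun k l => E (t ^ i * b k) (t ^ j * b l)) ^ (N - i - j + r - 3).choose (r - 2)) := by
  simp only [prodPairs_univ_fin (show 0 < r by omega), mul_pow, prod_mul_distrib]
  congr 1
  · rw [prod_range_succ', mul_comm]
    simp only [Nat.add_sub_add_right, Nat.sub_zero, pow_zero, one_mul, hb₀, pow_succ, mul_assoc]
  · rcases Nat.lt_or_ge r 3 with hr3 | hr3
    -- For `r = 2` there are no inner pairs, and Pascal's rule fails for the truncated exponents.
    · obtain rfl : r = 2 := by omega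
      simp only [prodPairs_fin_two_filter_ne_zero, one_pow, prod_const_one, mul_one]
    · exact prod_triangle_pow_pascal _ (w := fun x => (x + r - 3).choose (r - 2))
        (w₁ := fun x => (x + r - 3).choose (r - 3))
        (fun x => Nat.choose_eq_add_of_eq_succ (by omega) (by omega))
        (Nat.choose_eq_zero_of_lt (by omega)) N

end Pascal

-- Only `B` must be nonzero: if another denominator vanishes, both sides are `0` as `x / 0 = 0`.
theorem div_mul_div_eq_of_factorizations {K : Type*} [Field K]
    {G P F₁ F₂ F₃ Γ₁ B F₄ F₅ F₂' D Gs F₁' F₂'' H H' : K}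
    (hG : G * B = Γ₁ * Gs) (hB : B ≠ 0) (h₁ : F₁ = F₄ * F₁') (h₂ : F₂ = F₂' * F₂'')
    (h₃ : F₃ = F₅ * H * (D * H')) :
    G / P * F₁ * (F₂ / F₃)
      = P⁻¹ * (Γ₁ / B) * (F₄ / F₅) * (F₂' / D) * (Gs * F₁' * F₂'' / (H * H')) := by
  rw [h₁, h₂, h₃, show G = Γ₁ * Gs / B by rw [← hG, mul_div_cancel_right₀ _ hB]]
  ring

section Parameters

variable {M : Type*} [CommMonoid M] (p q t : ℂ) {r : ℕ} (n : ℕ) (a : Fin (2 * r + 4) → ℂ)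

theorem Atld_zero_mul_Atld_self (hr : 1 ≤ r) (ha0 : a 0 ≠ 0) :
    Atld p q t r n a ⟨0, by omega⟩ * Atld p q t r n a ⟨r, by omega⟩ = 1 := by
  simp only [Atld, if_neg (show 0 ≠ r by omega), if_neg (show 0 ≠ 2 * r + 3 by omega), if_true]
  exact mul_inv_cancel₀ ha0

theorem prodPairs_Bvec (hr : 1 ≤ r) (G : ℂ → ℂ → M) :
    (prodPairs univ fun k l => G (Bvec p q t r n a k) (Bvec p q t r n a l))
      = prodPairs (univ.filter fun k : Fin (2 * r + 4) => (k : ℕ) ≠ 0 ∧ (k : ℕ) ≠ r)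
          fun k l => G (Atld p q t r n a k) (Atld p q t r n a l) := by
  obtain ⟨e, he, he_val⟩ : ∃ e : Fin (2 * (r - 1) + 4) → Fin (2 * r + 4), StrictMono e ∧
      ∀ k, (e k : ℕ) = if (k : ℕ) < r - 1 then (k : ℕ) + 1 else (k : ℕ) + 2 :=
    ⟨fun k => ⟨if (k : ℕ) < r - 1 then k + 1 else k + 2, by split_ifs <;> omega⟩,
      fun k l hkl => by rw [Fin.lt_def] at hkl ⊢; dsimp only; split_ifs <;> omega,
      fun _ => rfl⟩
  have hmap : univ.map ⟨e, he.injective⟩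
      = univ.filter fun k : Fin (2 * r + 4) => (k : ℕ) ≠ 0 ∧ (k : ℕ) ≠ r := by
    ext k
    simp only [mem_map, mem_univ, true_and, mem_filter, Function.Embedding.coeFn_mk, Fin.ext_iff,
      he_val]
    constructor
    · rintro ⟨l, hl⟩; split_ifs at hl <;> omega
    · intro hk
      by_cases hkr : (k : ℕ) < r
      · exact ⟨⟨k - 1, by omega⟩, by rw [if_pos (by simp only; omega)]; simp only; omega⟩
      · exact ⟨⟨k - 2, by omega⟩, by rw [if_neg (by simp only; omega)]; simp only; omega⟩
  have hB : ∀ k, Bvec p q t r n a k = Atld p q t r n a (e k) := by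
    intro k
    have := he_val k
    simp only [Bvec, Atld]
    split_ifs at this ⊢ <;> first | omega | rfl | exact congrArg a (Fin.ext (by simp only; omega))
  rw [← hmap, prodPairs_map_of_strictMono _ he]
  simp only [hB]

theorem prodPairs_Bvec_castLE (hr : 1 ≤ r) (G : ℂ → ℂ → M) :
    (prodPairs univ fun k l : Fin (r - 1) =>
        G (Bvec p q t r n a (Fin.castLE (by omega) k)) (Bvec p q t r n a (Fin.castLE (by omega) l)))
      = prodPairs (univ.filter fun k : Fin r => (k : ℕ) ≠ 0)
          fun k l => G (a (Fin.castLE (by omega) k)) (a (Fin.castLE (by omega) l)) := by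
  have he : StrictMono fun k : Fin (r - 1) => (⟨k + 1, by omega⟩ : Fin r) :=
    fun k l hkl => Fin.lt_def.2 (Nat.succ_lt_succ (Fin.lt_def.1 hkl))
  have hmap : univ.map ⟨_, he.injective⟩ = univ.filter fun k : Fin r => (k : ℕ) ≠ 0 := by
    ext k
    simp only [mem_map, mem_univ, true_and, mem_filter, Function.Embedding.coeFn_mk, Fin.ext_iff]
    exact ⟨fun ⟨l, hl⟩ => by omega, fun hk => ⟨⟨k - 1, by omega⟩, by simp only; omega⟩⟩
  have hB : ∀ k : Fin (r - 1), Bvec p q t r n a (Fin.castLE (by omega) k)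
      = a (Fin.castLE (by omega) (⟨k + 1, by omega⟩ : Fin r)) := fun k =>
    dif_pos k.isLt
  rw [← hmap, prodPairs_map_of_strictMono _ he]
  simp only [hB]

theorem Lfun_Bvec (hr : 2 ≤ r) (N : ℕ) :
    Lfun p q t (r - 1) (N + 1) (Bvec p q t r (N + 1) a)
      = (∏ i ∈ range (N + 1),
            (prodPairs (univ.filter fun k : Fin (2 * r + 4) => (k : ℕ) ≠ 0 ∧ (k : ℕ) ≠ r)
              fun k l =>
                ellGamma (t ^ i * (Atld p q t r (N + 1) a k * Atld p q t r (N + 1) a l)) p q)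
              ^ (N - i + r - 2).choose (r - 2)) /
        ∏ i ∈ range (N + 1), ∏ j ∈ range (N + 1 - i),
          (prodPairs (univ.filter fun k : Fin r => (k : ℕ) ≠ 0) fun k l =>
              efun p t (t ^ i * a (Fin.castLE (by omega) k)) (t ^ j * a (Fin.castLE (by omega) l)) *
                efun q t (t ^ i * a (Fin.castLE (by omega) k))
                  (t ^ j * a (Fin.castLE (by omega) l)))
            ^ (N - i - j + r - 3).choose (r - 3) := by
  unfold Lfun
  simp only [prod_pow]
  congr 1
  · refine prod_congr rfl fun i hi => ?_
    rw [mem_range] at hi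
    rw [show (N + 1 - i + (r - 1) - 2).choose (r - 1 - 1)
        = (N - i + r - 2).choose (r - 2) by congr 1; omega]
    exact congrArg (· ^ _)
      (prodPairs_Bvec p q t (N + 1) a (by omega) fun u v => ellGamma (t ^ i * (u * v)) p q)
  · refine prod_congr rfl fun i hi => prod_congr rfl fun j hj => ?_
    rw [mem_range] at hi hj
    rw [show (N + 1 - i - j + (r - 1) - 3).choose (r - 1 - 2)
        = (N - i - j + r - 3).choose (r - 3) by congr 1; omega]
    exact congrArg (· ^ _) (prodPairs_Bvec_castLE p q t (N + 1) a (by omega)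
      fun u v => efun p t (t ^ i * u) (t ^ j * v) * efun q t (t ^ i * u) (t ^ j * v))

theorem prodPairs_ellGamma_Ashift (hr : 1 ≤ r) (ha0 : a 0 ≠ 0) (i : ℕ) :
    (prodPairs univ fun k l =>
        ellGamma (t ^ i * (Ashift p q t r n a k * Ashift p q t r n a l)) p q)
      = ellGamma (t ^ (i + 2)) p q *
          (∏ k ∈ univ.filter (fun k : Fin (2 * r + 4) => (k : ℕ) ≠ 0 ∧ (k : ℕ) ≠ r),
            ellGamma (t ^ (i + 1) * (a 0 * Atld p q t r n a k)) p q *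
              ellGamma (t ^ (i + 1) * (Atld p q t r n a k / a 0)) p q) *
          prodPairs (univ.filter fun k : Fin (2 * r + 4) => (k : ℕ) ≠ 0 ∧ (k : ℕ) ≠ r)
            fun k l => ellGamma (t ^ i * (Atld p q t r n a k * Atld p q t r n a l)) p q := by
  set S := univ.filter fun k : Fin (2 * r + 4) => (k : ℕ) ≠ 0 ∧ (k : ℕ) ≠ r
  have huniv :
      (univ : Finset (Fin (2 * r + 4))) = insert ⟨0, by omega⟩ (insert ⟨r, by omega⟩ S) := by
    ext k
    simp only [mem_univ, mem_insert, Fin.ext_iff, S, mem_filter, true_and, true_iff]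
    omega
  have hS : ∀ k ∈ S, Ashift p q t r n a k = Atld p q t r n a k := fun k hk => by
    simp only [S, mem_filter] at hk
    simp only [Ashift, if_neg hk.2.1, if_neg hk.2.2]
  have h0r : Ashift p q t r n a ⟨0, by omega⟩ * Ashift p q t r n a ⟨r, by omega⟩ = t ^ 2 := by
    simp only [Ashift, if_neg (show r ≠ 0 by omega), if_true]
    field_simp
  rw [huniv, prodPairs_insert_insert_of_symm
    (by simp only [mem_insert, S, mem_filter, Fin.ext_iff, not_or]; omega)
    (by simp [S])
    fun k l => by rw [mul_comm (Ashift p q t r n a k)]]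
  congr 1
  · rw [h0r, ← pow_add]
    refine congrArg _ (prod_congr rfl fun k hk => ?_)
    rw [hS k hk]
    simp only [Ashift, if_neg (show r ≠ 0 by omega), if_true]
    congr 1 <;> congr 1 <;> ring
  · refine prod_congr rfl fun k hk => prod_congr rfl fun l hl => ?_
    dsimp only
    rw [hS k hk, hS l (mem_filter.1 hl).1]

theorem prodPairs_efun_Ashift (hr : 1 ≤ r) (E : ℂ → ℂ → M) (i j : ℕ) :
    (prodPairs univ fun k l : Fin r =>
        E (t ^ i * Ashift p q t r n a (Fin.castLE (by omega) k))
          (t ^ j * Ashift p q t r n a (Fin.castLE (by omega) l)))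
      = (∏ l ∈ univ.filter (fun l : Fin r => (l : ℕ) ≠ 0),
            E (t ^ (i + 1) * a 0) (t ^ j * a (Fin.castLE (by omega) l))) *
          prodPairs (univ.filter fun l : Fin r => (l : ℕ) ≠ 0) fun k l =>
            E (t ^ i * a (Fin.castLE (by omega) k)) (t ^ j * a (Fin.castLE (by omega) l)) := by
  have hA : ∀ l : Fin r, (l : ℕ) ≠ 0 →
      Ashift p q t r n a (Fin.castLE (by omega) l) = a (Fin.castLE (by omega) l) := fun l hl => by
    simp only [Ashift, Atld, Fin.val_castLE, if_neg hl, if_neg (Nat.ne_of_lt l.isLt)]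
    rw [if_neg (by omega)]
  rw [prodPairs_univ_fin (by omega)]
  congr 1
  · refine prod_congr rfl fun l hl => ?_
    rw [hA l (mem_filter.1 hl).2, pow_succ, mul_assoc]
    rfl
  · refine prod_congr rfl fun k hk => prod_congr rfl fun l hl => ?_
    dsimp only
    rw [hA k (mem_filter.1 hk).2, hA l (mem_filter.1 (mem_filter.1 hl).1).2]

theorem Lfun_Ashift (hr : 2 ≤ r) (ha0 : a 0 ≠ 0) (N : ℕ) :
    Lfun p q t r N (Ashift p q t r (N + 1) a)
      = (∏ i ∈ range N, ellGamma (t ^ (i + 2)) p q ^ (N - i + r - 2).choose (r - 1)) *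
          (∏ i ∈ range N,
            (∏ k ∈ univ.filter (fun k : Fin (2 * r + 4) => (k : ℕ) ≠ 0 ∧ (k : ℕ) ≠ r),
              ellGamma (t ^ (i + 1) * (a 0 * Atld p q t r (N + 1) a k)) p q *
                ellGamma (t ^ (i + 1) * (Atld p q t r (N + 1) a k / a 0)) p q)
              ^ (N - i + r - 2).choose (r - 1)) *
          (∏ i ∈ range N,
            (prodPairs (univ.filter fun k : Fin (2 * r + 4) => (k : ℕ) ≠ 0 ∧ (k : ℕ) ≠ r)
              fun k l =>
                ellGamma (t ^ i * (Atld p q t r (N + 1) a k * Atld p q t r (N + 1) a l)) p q)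
              ^ (N - i + r - 2).choose (r - 1)) /
        ((∏ i ∈ range N, ∏ j ∈ range (N - i),
            (∏ l ∈ univ.filter (fun l : Fin r => (l : ℕ) ≠ 0),
              efun p t (t ^ (i + 1) * a 0) (t ^ j * a (Fin.castLE (by omega) l)) *
                efun q t (t ^ (i + 1) * a 0) (t ^ j * a (Fin.castLE (by omega) l)))
              ^ (N - i - j + r - 3).choose (r - 2)) *
          ∏ i ∈ range N, ∏ j ∈ range (N - i),
            (prodPairs (univ.filter fun k : Fin r => (k : ℕ) ≠ 0) fun k l =>
              efun p t (t ^ i * a (Fin.castLE (by omega) k)) (t ^ j * a (Fin.castLE (by omega) l)) *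
                efun q t (t ^ i * a (Fin.castLE (by omega) k))
                  (t ^ j * a (Fin.castLE (by omega) l)))
              ^ (N - i - j + r - 3).choose (r - 2)) := by
  unfold Lfun
  simp only [prod_pow]
  congr 1
  · simp only [← prod_mul_distrib, ← mul_pow]
    exact prod_congr rfl fun i _ =>
      congrArg (· ^ _) (prodPairs_ellGamma_Ashift p q t (N + 1) a (by omega) ha0 i)
  · simp only [← prod_mul_distrib, ← mul_pow]
    exact prod_congr rfl fun i _ => prod_congr rfl fun j _ =>
      congrArg (· ^ _) (prodPairs_efun_Ashift p q t (N + 1) a (by omega)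
        (fun u v => efun p t u v * efun q t u v) i j)

end Parameters

/-- the recursion satisfied by `L̃_{r,n}` in terms of
`L_{r-1,n}` and `L_{r,n-1}`. -/
theorem Ltilde_recursion (r n : ℕ) (hr : 2 ≤ r) (hn : 1 ≤ n)
    (p q t : ℂ)
    (a : Fin (2 * r + 4) → ℂ) (ha : ∀ k, a k ≠ 0)
    (ht1 : ∀ i : ℕ, 1 ≤ i → i ≤ 2 * n → t ^ i ≠ 1)
    (hgam : ∀ i : ℕ, i ≤ 2 * n → ∀ k l : Fin (2 * r + 4),
      t ^ i * (Atld p q t r n a k * Atld p q t r n a l) ≠ 1 →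
      ellGamma (t ^ i * (Atld p q t r n a k * Atld p q t r n a l)) p q ≠ 0) :
    ((∏ i ∈ Finset.range (n - 1),
        ellGamma (t ^ (i + 1)) p q ^ ((n - (i + 1) + r - 2).choose (r - 1)))
      / (poch p p * poch q q) ^ ((n + r - 2).choose (r - 1)))
    * (∏ i ∈ Finset.range n,
        ∏ k ∈ Finset.univ.filter (fun k : Fin (2 * r + 4) => (k : ℕ) ≠ 0 ∧ (k : ℕ) ≠ r),
          (ellGamma (t ^ i * (a 0 * Atld p q t r n a k)) p q *
            ellGamma (t ^ i * (Atld p q t r n a k / a 0)) p q)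
            ^ ((n - i + r - 2).choose (r - 1)))
    * ((∏ i ∈ Finset.range n,
          ∏ k ∈ Finset.univ.filter (fun k : Fin (2 * r + 4) => (k : ℕ) ≠ 0 ∧ (k : ℕ) ≠ r),
            ∏ l ∈ Finset.univ.filter
                (fun l : Fin (2 * r + 4) => k < l ∧ (l : ℕ) ≠ 0 ∧ (l : ℕ) ≠ r),
              ellGamma (t ^ i * (Atld p q t r n a k * Atld p q t r n a l)) p q
                ^ ((n - i + r - 2).choose (r - 1)))
        / ∏ i ∈ Finset.range n, ∏ j ∈ Finset.range (n - i), ∏ k : Fin r,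
            ∏ l ∈ Finset.univ.filter (fun l => k < l),
              (efun p t (t ^ i * a (Fin.castLE (by omega) k))
                  (t ^ j * a (Fin.castLE (by omega) l)) *
                efun q t (t ^ i * a (Fin.castLE (by omega) k))
                  (t ^ j * a (Fin.castLE (by omega) l)))
                ^ ((n - i - j + r - 3).choose (r - 2)))
    = ((poch p p * poch q q) ^ ((n + r - 2).choose (r - 1)))⁻¹
      * (ellGamma t p q ^ ((n + r - 2).choose (r - 1))
          / ∏ i ∈ Finset.range n,
              ellGamma (t ^ (i + 1)) p q ^ ((n - (i + 1) + r - 2).choose (r - 2)))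
      * ((∏ k ∈ Finset.univ.filter (fun k : Fin (2 * r + 4) => (k : ℕ) ≠ 0 ∧ (k : ℕ) ≠ r),
            (ellGamma (a 0 * Atld p q t r n a k) p q *
              ellGamma (Atld p q t r n a k / a 0) p q) ^ ((n + r - 2).choose (r - 1)))
          / ∏ j ∈ Finset.range n, ∏ l ∈ Finset.univ.filter (fun l : Fin r => (l : ℕ) ≠ 0),
              (efun p t (a 0) (t ^ j * a (Fin.castLE (by omega) l)) *
                efun q t (a 0) (t ^ j * a (Fin.castLE (by omega) l)))
                ^ ((n - j + r - 3).choose (r - 2)))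
      * Lfun p q t (r - 1) n (Bvec p q t r n a)
      * Lfun p q t r (n - 1) (Ashift p q t r n a) := by
  obtain ⟨N, rfl⟩ := Nat.exists_eq_add_of_le' hn
  have hB :
      ∏ i ∈ range (N + 1), ellGamma (t ^ (i + 1)) p q ^ (N - i + r - 2).choose (r - 2) ≠ 0 := by
    refine prod_ne_zero_iff.2 fun i hi => pow_ne_zero _ ?_
    rw [mem_range] at hi
    have h := hgam (i + 1) (by omega) ⟨0, by omega⟩ ⟨r, by omega⟩
    rw [Atld_zero_mul_Atld_self p q t (N + 1) a (by omega) (ha 0), mul_one] at h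
    exact h (ht1 _ (by omega) (by omega))
  simp only [Nat.add_sub_cancel, Nat.add_sub_add_right, prod_pow, prod_filter_pairs_eq_prodPairs]
  rw [Lfun_Bvec p q t a hr N, Lfun_Ashift p q t a hr (ha 0) N]
  refine div_mul_div_eq_of_factorizations ?_ hB ?_ ?_ ?_
  · simpa only [pow_one] using
      prod_pow_choose_mul_prod_pow_choose (fun m => ellGamma (t ^ m) p q) hr N
  · rw [prod_range_succ', mul_comm]
    simp only [Nat.add_sub_add_right, Nat.sub_zero, pow_zero, one_mul]
  · exact prod_range_pow_pascal _ (w := fun x => (x + r - 2).choose (r - 1))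
      (w₁ := fun x => (x + r - 2).choose (r - 2))
      (fun x => Nat.choose_eq_add_of_eq_succ (by omega) (by omega))
      (Nat.choose_eq_zero_of_lt (by omega)) N
  · exact prod_triangle_prodPairs_fin_eq hr (fun u v => efun p t u v * efun q t u v) t
      (fun k => a (Fin.castLE (by omega) k)) (congrArg a (Fin.ext (by simp))) N

end
end

section
/- Let p,q∈ℂ with |p|<1, |q|<1 and t∈ℂ* be such that (p;p)_∞≠0, (q;q)_∞≠0 and Γ(t^i;p,q) is defined and nonzero for all i≥1. Suppose c:{1,2,3,…}×ℕ→ℂ satisfies: c_{r,0}=1 for all r≥1; c_{1,n}=c_{1,n-1}·(2n/((p;p)_∞(q;q)_∞))·Γ(t^n;p,q)/Γ(t;p,q) for all n≥1; and c_{r,n}=c_{r-1,n}·c_{r,n-1}·(2n/((p;p)_∞(q;q)_∞))^{C(n+r-2,r-1)}·[∏_{i=1}^n Γ(t^i;p,q)^{C(n-i+r-2,r-2)}]/Γ(t;p,q)^{C(n+r-2,r-1)} for all r≥2 and n≥1. Then for all r≥1 and n≥0, c_{r,n} = ( 2^n·n!/((p;p)_∞^n(q;q)_∞^n) )^{C(n+r-1,r-1)}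 · ∏_{i=1}^n ( Γ(t^i;p,q)/Γ(t;p,q) )^{r·C(n-i+r-1,r-1)}, where C(a,b)=binomial(a,b). -/
open scoped BigOperators Topology
open Finset MeasureTheory

noncomputable section

/-! Only the multiplicative structure of the recursion matters. With `a_k = 2k/((p;p)_∞(q;q)_∞)`
and `x_i = Γ(t^i)/Γ(t)`, the claimed `c_{r,n}` is a product of powers of `∏_{k ≤ n} a_k` and of the
`x_i`, and the recursion for `r ≥ 2` reduces to Pascal's rule for the exponents, once the
hockey-stick identity `C(n+r-2, r-1) = ∑_{i=1}^n C(n-i+r-2, r-2)` has distributed the power of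
`Γ(t)` over the `Γ(t^i)`. -/

lemma Nat.sum_range_sub_add_choose (n s : ℕ) :
    ∑ i ∈ range (n + 1), (n - i + s).choose s = (n + s + 1).choose (s + 1) := by
  rw [← Finset.sum_range_reflect, ← Nat.sum_range_add_choose]
  refine Finset.sum_congr rfl fun i hi => ?_
  rw [show n - (n + 1 - 1 - i) = i by have := mem_range.mp hi; omega]

lemma Finset.prod_pow_div_pow_sum {ι M : Type*} [DivisionCommMonoid M] (s : Finset ι)
    (g : ι → M) (b : M) (e : ι → ℕ) :
    (∏ i ∈ s, g i ^ e i) / b ^ (∑ i ∈ s, e i) = ∏ i ∈ s, (g i / b) ^ e i := by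
  rw [← prod_pow_eq_pow_sum, ← prod_div_distrib]
  exact prod_congr rfl fun i _ => (div_pow _ _ _).symm

lemma prod_pow_choose_div_pow_choose {M : Type*} [DivisionCommMonoid M] (g : ℕ → M) (b : M)
    (n s : ℕ) :
    (∏ i ∈ range (n + 1), g i ^ (n - i + s).choose s) / b ^ (n + s + 1).choose (s + 1)
      = ∏ i ∈ range (n + 1), (g i / b) ^ (n - i + s).choose s := by
  rw [← Nat.sum_range_sub_add_choose, prod_pow_div_pow_sum]

lemma Finset.prod_range_two_mul_succ_div {K : Type*} [Field K] (D : K) (n : ℕ) :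
    ∏ k ∈ range n, 2 * ((k + 1 : ℕ) : K) / D = 2 ^ n * (n.factorial : K) / D ^ n := by
  rw [prod_div_distrib, prod_mul_distrib, prod_const, card_range, ← Nat.cast_prod,
    prod_range_add_one_eq_factorial, prod_const, card_range]

section PascalRecursion

variable {M : Type*} [CommMonoid M]

lemma pow_choose_pascal_step (a : ℕ → M) (n s : ℕ) :
    (∏ k ∈ range (n + 1), a k) ^ (n + 1 + s).choose s
        * (∏ k ∈ range n, a k) ^ (n + (s + 1)).choose (s + 1) * a n ^ (n + s + 1).choose (s + 1)
      = (∏ k ∈ range (n + 1), a k) ^ (n + 1 + (s + 1)).choose (s + 1) := by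
  rw [show n + 1 + (s + 1) = n + s + 1 + 1 by ring, Nat.choose_succ_succ' (n + s + 1) s,
    show n + 1 + s = n + s + 1 by ring, show n + (s + 1) = n + s + 1 by ring, pow_add,
    prod_range_succ, mul_pow _ _ ((n + s + 1).choose (s + 1))]
  ac_rfl

lemma prod_pow_choose_pascal_step (x : ℕ → M) (n s : ℕ) :
    (∏ i ∈ range (n + 1), x i ^ ((s + 1) * (n + 1 - (i + 1) + s).choose s))
        * (∏ i ∈ range n, x i ^ ((s + 1 + 1) * (n - (i + 1) + (s + 1)).choose (s + 1)))
        * ∏ i ∈ range (n + 1), x i ^ (n - i + s).choose s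
      = ∏ i ∈ range (n + 1), x i ^ ((s + 1 + 1) * (n + 1 - (i + 1) + (s + 1)).choose (s + 1)) := by
  have hexp : ∀ i ∈ range n, x i ^ ((s + 1) * (n - i + s).choose s)
      * x i ^ ((s + 1 + 1) * (n - (i + 1) + (s + 1)).choose (s + 1)) * x i ^ (n - i + s).choose s
      = x i ^ ((s + 1 + 1) * (n - i + (s + 1)).choose (s + 1)) := by
    intro i hi
    obtain ⟨d, rfl⟩ := Nat.exists_eq_add_of_lt (mem_range.mp hi)
    rw [← pow_add, ← pow_add, show i + d + 1 - i = d + 1 by omega,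
      show i + d + 1 - (i + 1) = d by omega, show d + 1 + (s + 1) = d + 1 + s + 1 by ring,
      Nat.choose_succ_succ' (d + 1 + s), show d + (s + 1) = d + 1 + s by ring]
    ring_nf
  simp only [Nat.add_sub_add_right, prod_range_succ _ n, Nat.sub_self, zero_add, Nat.choose_self]
  rw [← prod_congr rfl hexp, prod_mul_distrib, prod_mul_distrib]
  simp only [mul_one, pow_one, pow_succ _ (s + 1)]
  ac_rfl

theorem eq_of_pascal_recursion (a x : ℕ → M) (c : ℕ → ℕ → M)
    (h0 : ∀ s, c s 0 = 1)
    (h1 : ∀ n, c 0 (n + 1) = c 0 n * a n * x n)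
    (h2 : ∀ s n, c (s + 1) (n + 1) = c s (n + 1) * c (s + 1) n
      * a n ^ (n + s + 1).choose (s + 1) * ∏ i ∈ range (n + 1), x i ^ (n - i + s).choose s) :
    ∀ s n, c s n = (∏ k ∈ range n, a k) ^ (n + s).choose s
      * ∏ i ∈ range n, x i ^ ((s + 1) * (n - (i + 1) + s).choose s) := by
  intro s
  induction s with
  | zero =>
    intro n
    simp only [zero_add, add_zero, Nat.choose_zero_right, pow_one, mul_one]
    induction n with
    | zero => simp [h0]
    | succ n ih => rw [h1, ih, prod_range_succ, prod_range_succ]; ac_rfl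
  | succ s ih =>
    intro n
    induction n with
    | zero => simp [h0]
    | succ n ihn =>
      rw [h2, ih, ihn, ← pow_choose_pascal_step, ← prod_pow_choose_pascal_step]
      ac_rfl

end PascalRecursion

theorem crn_recursion_solution_general (p q t : ℂ)
    (c : ℕ → ℕ → ℂ)
    (h0 : ∀ r : ℕ, 1 ≤ r → c r 0 = 1)
    (h1 : ∀ n : ℕ, 1 ≤ n →
      c 1 n = c 1 (n - 1) * ((2 * (n : ℂ)) / (poch p p * poch q q))
        * (ellGamma (t ^ n) p q / ellGamma t p q))
    (h2 : ∀ r n : ℕ, 2 ≤ r → 1 ≤ n →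
      c r n = c (r - 1) n * c r (n - 1)
        * ((2 * (n : ℂ)) / (poch p p * poch q q)) ^ ((n + r - 2).choose (r - 1))
        * (∏ i ∈ Finset.range n,
            ellGamma (t ^ (i + 1)) p q ^ ((n - (i + 1) + r - 2).choose (r - 2)))
        / ellGamma t p q ^ ((n + r - 2).choose (r - 1))) :
    ∀ r n : ℕ, 1 ≤ r →
      c r n = ((2 : ℂ) ^ n * (n.factorial : ℂ) / (poch p p ^ n * poch q q ^ n))
          ^ ((n + r - 1).choose (r - 1))
        * ∏ i ∈ Finset.range n,
            (ellGamma (t ^ (i + 1)) p q / ellGamma t p q)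
              ^ (r * ((n - (i + 1) + r - 1).choose (r - 1))) := by
  have hsol := eq_of_pascal_recursion (fun k => 2 * ((k + 1 : ℕ) : ℂ) / (poch p p * poch q q))
    (fun i => ellGamma (t ^ (i + 1)) p q / ellGamma t p q) (fun s n => c (s + 1) n)
    (fun s => h0 (s + 1) (by omega)) (fun n => h1 (n + 1) (by omega))
    (fun s n => by
      have hexp : ∀ i ∈ range (n + 1),
          ellGamma (t ^ (i + 1)) p q ^ (n + 1 - (i + 1) + (s + 1 + 1) - 2).choose s
            = ellGamma (t ^ (i + 1)) p q ^ (n - i + s).choose s := fun i _ => by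
        rw [show n + 1 - (i + 1) + (s + 1 + 1) - 2 = n - i + s by omega]
      rw [h2 (s + 1 + 1) (n + 1) (by omega) (by omega), mul_div_assoc,
        show n + 1 + (s + 1 + 1) - 2 = n + s + 1 by omega, show s + 1 + 1 - 2 = s by omega,
        prod_congr rfl hexp, Nat.add_sub_cancel, Nat.add_sub_cancel,
        prod_pow_choose_div_pow_choose])
  intro r n hr
  obtain ⟨s, rfl⟩ := Nat.exists_eq_add_of_le' hr
  rw [hsol, prod_range_two_mul_succ_div, mul_pow]
  simp only [← add_assoc, Nat.add_sub_cancel]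

/-- solving the recurrence for the constants `c_{r,n}`. -/
theorem crn_recursion_solution (p q t : ℂ)
    (hp : ‖p‖ < 1) (hq : ‖q‖ < 1) (ht : t ≠ 0)
    (hpp : poch p p ≠ 0) (hqq : poch q q ≠ 0)
    (hgam : ∀ i : ℕ, 1 ≤ i → ellGamma (t ^ i) p q ≠ 0)
    (c : ℕ → ℕ → ℂ)
    (h0 : ∀ r : ℕ, 1 ≤ r → c r 0 = 1)
    (h1 : ∀ n : ℕ, 1 ≤ n →
      c 1 n = c 1 (n - 1) * ((2 * (n : ℂ)) / (poch p p * poch q q))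
        * (ellGamma (t ^ n) p q / ellGamma t p q))
    (h2 : ∀ r n : ℕ, 2 ≤ r → 1 ≤ n →
      c r n = c (r - 1) n * c r (n - 1)
        * ((2 * (n : ℂ)) / (poch p p * poch q q)) ^ ((n + r - 2).choose (r - 1))
        * (∏ i ∈ Finset.range n,
            ellGamma (t ^ (i + 1)) p q ^ ((n - (i + 1) + r - 2).choose (r - 2)))
        / ellGamma t p q ^ ((n + r - 2).choose (r - 1))) :
    ∀ r n : ℕ, 1 ≤ r →
      c r n = ((2 : ℂ) ^ n * (n.factorial : ℂ) / (poch p p ^ n * poch q q ^ n))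
          ^ ((n + r - 1).choose (r - 1))
        * ∏ i ∈ Finset.range n,
            (ellGamma (t ^ (i + 1)) p q / ellGamma t p q)
              ^ (r * ((n - (i + 1) + r - 1).choose (r - 1))) :=
  crn_recursion_solution_general p q t c h0 h1 h2

end
end
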